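/- Fix r > 1, reals β > α ≥ 1, and a prime p. Let a_0 be the least nonnegative integer with σ_{-r}(p^{a_0+1})/σ_{-r}(p^{a_0}) ≤ β/α. For 0 ≤ a < a_0 set J_a = σ_{-r}(p^a)·[α, β], and set J_{a_0} = [σ_{-r}(p^{a_0})·α, (1/(1 - p^{-r}))·β]. Then the intervals J_0, …, J_{a_0} are pairwise disjoint and the union over a ∈ ℕ ∪ {∞} of σ_{-r}(p^a)·[α, β] equals J_0 ∪ ⋯ ∪ J_{a_0}. -/

import Mathlib

noncomputable def sigma' (r : ℝ) (n : ℕ) : ℝ := ∑ d ∈ n.divisors, (d : ℝ) ^ (-r)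

/-!
With `q = p^(-r) ∈ (0, 1)`, `S_a = σ_{-r}(p^a) = 1 + q + ⋯ + q^a` increases to `1/(1 - q)`, and
its consecutive ratios decrease because `S_{a+1}^2 - S_a S_{a+2} = q^{a+1}`. Hence the intervals
`S_a·[α, β]` are separated by gaps for `a < a₀` and overlap consecutively for `a ≥ a₀`; the
overlapping tail, together with its limit interval, fills `[S_{a₀} α, β/(1 - q)]`.
-/

open Finset Filter Topology

theorem geom_sum_succ_sq_sub_mul {R : Type*} [CommRing R] (q : R) (n : ℕ) :
    (∑ i ∈ range (n + 2), q ^ i) ^ 2 - (∑ i ∈ range (n + 1), q ^ i) * ∑ i ∈ range (n + 3), q ^ i =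
      q ^ (n + 1) := by
  have h := mul_neg_geom_sum q (n + 1)
  simp only [sum_range_succ _ (n + 1), sum_range_succ _ (n + 2)]
  linear_combination q ^ (n + 1) * h

theorem antitone_geom_sum_succ_div {𝕜 : Type*} [Field 𝕜] [LinearOrder 𝕜] [IsStrictOrderedRing 𝕜]
    {q : 𝕜} (hq : 0 ≤ q) :
    Antitone fun n => (∑ i ∈ range (n + 2), q ^ i) / ∑ i ∈ range (n + 1), q ^ i := by
  refine antitone_nat_of_succ_le fun n => ?_
  rw [div_le_div_iff₀ (geom_sum_pos hq (by omega)) (geom_sum_pos hq (by omega))]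
  linarith [geom_sum_succ_sq_sub_mul q n, pow_nonneg hq (n + 1)]

theorem monotone_geom_sum {R : Type*} [Semiring R] [PartialOrder R] [IsOrderedRing R]
    {q : R} (hq : 0 ≤ q) : Monotone fun n => ∑ i ∈ range n, q ^ i :=
  fun _ _ h => sum_le_sum_of_subset_of_nonneg (range_mono h) fun i _ _ => pow_nonneg hq i

theorem sigma'_prime_pow (r : ℝ) {p : ℕ} (hp : p.Prime) (a : ℕ) :
    sigma' r (p ^ a) = ∑ i ∈ range (a + 1), ((p : ℝ) ^ (-r)) ^ i := by
  rw [sigma', Nat.sum_divisors_prime_pow hp]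
  refine sum_congr rfl fun i _ => ?_
  push_cast
  rw [← Real.rpow_natCast, ← Real.rpow_natCast, ← Real.rpow_mul (Nat.cast_nonneg p),
    ← Real.rpow_mul (Nat.cast_nonneg p), mul_comm]

theorem sigma'_prime_pow_pos (r : ℝ) {p : ℕ} (hp : p.Prime) (a : ℕ) : 0 < sigma' r (p ^ a) := by
  rw [sigma'_prime_pow r hp]
  exact geom_sum_pos (by positivity) (by omega)

theorem monotone_sigma'_prime_pow (r : ℝ) {p : ℕ} (hp : p.Prime) :
    Monotone fun a => sigma' r (p ^ a) := by
  simp_rw [sigma'_prime_pow r hp]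
  exact (monotone_geom_sum (by positivity)).comp fun _ _ h => by omega

theorem antitone_sigma'_prime_pow_succ_div (r : ℝ) {p : ℕ} (hp : p.Prime) :
    Antitone fun a => sigma' r (p ^ (a + 1)) / sigma' r (p ^ a) := by
  simp_rw [sigma'_prime_pow r hp]
  exact antitone_geom_sum_succ_div (by positivity)

theorem tendsto_sigma'_prime_pow {r : ℝ} {p : ℕ} (hp : p.Prime) (hr : 0 < r) :
    Tendsto (fun a => sigma' r (p ^ a)) atTop (𝓝 (1 - (p : ℝ) ^ (-r))⁻¹) := by
  have hp1 : (1 : ℝ) < p := by exact_mod_cast hp.one_lt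
  simp_rw [sigma'_prime_pow r hp]
  exact (hasSum_geometric_of_lt_one (by positivity)
    (Real.rpow_lt_one_of_one_lt_of_neg hp1 (by linarith))).tendsto_sum_nat.comp
    (tendsto_add_atTop_nat 1)

theorem Monotone.exists_le_and_lt_succ {α : Type*} [LinearOrder α] {f : ℕ → α} (hf : Monotone f)
    {m n : ℕ} {x : α} (hm : f m ≤ x) (hn : x < f n) : ∃ i ≥ m, f i ≤ x ∧ x < f (i + 1) := by
  induction n with
  | zero => exact absurd (hm.trans_lt hn) (not_lt.2 (hf m.zero_le))
  | succ k ih =>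
    by_cases hk : x < f k
    · exact ih hk
    · refine ⟨k, ?_, not_lt.1 hk, hn⟩
      by_contra! hkm
      exact hm.not_gt (hn.trans_le (hf hkm))

theorem biUnion_Icc_union_Icc_eq_Icc_of_tendsto {α : Type*} [LinearOrder α] [TopologicalSpace α]
    [OrderTopology α] {f g : ℕ → α} {l u : α} (hf : Monotone f) (hg : Monotone g)
    (hfl : Tendsto f atTop (𝓝 l)) (hgu : Tendsto g atTop (𝓝 u)) {a₀ : ℕ}
    (hchain : ∀ a ≥ a₀, f (a + 1) ≤ g a) :
    (⋃ a ≥ a₀, Set.Icc (f a) (g a)) ∪ Set.Icc l u = Set.Icc (f a₀) u := by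
  refine subset_antisymm (Set.union_subset ?_ ?_) fun x hx => ?_
  · exact Set.iUnion₂_subset fun a ha => Set.Icc_subset_Icc (hf ha) (hg.ge_of_tendsto hgu a)
  · exact Set.Icc_subset_Icc_left (hf.ge_of_tendsto hfl a₀)
  · by_cases hlx : l ≤ x
    · exact Or.inr ⟨hlx, hx.2⟩
    · obtain ⟨n, hn⟩ := (hfl.eventually (eventually_gt_nhds (not_le.1 hlx))).exists
      obtain ⟨i, hi, hfi, hxi⟩ := hf.exists_le_and_lt_succ hx.1 hn
      exact Or.inl (Set.mem_biUnion hi ⟨hfi, hxi.le.trans (hchain i hi)⟩)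

theorem iUnion_eq_biUnion_ge_union_biUnion_range {β : Type*} (s : ℕ → Set β) (n : ℕ) :
    ⋃ a, s a = (⋃ a ≥ n, s a) ∪ ⋃ a ∈ range n, s a := by
  ext x
  simp only [Set.mem_union, Set.mem_iUnion, mem_range, exists_prop]
  constructor
  · rintro ⟨a, hx⟩
    exact (le_or_gt n a).imp (fun ha => ⟨a, ha, hx⟩) fun ha => ⟨a, ha, hx⟩
  · rintro (⟨a, -, hx⟩ | ⟨a, -, hx⟩) <;> exact ⟨a, hx⟩

theorem disjoint_of_subset_Iic_of_subset_Ici {α : Type*} [LinearOrder α] {f g : ℕ → α}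
    {J : ℕ → Set α} {n : ℕ} (hf : Monotone f) (hgap : ∀ a < n, g a < f (a + 1))
    (hJg : ∀ a < n, J a ⊆ Set.Iic (g a)) (hJf : ∀ a ≤ n, J a ⊆ Set.Ici (f a)) :
    ∀ a ≤ n, ∀ b ≤ n, a ≠ b → Disjoint (J a) (J b) := by
  have hsep : ∀ a b, a < b → b ≤ n → Disjoint (J a) (J b) := fun a b hab hb =>
    (Set.Iio_disjoint_Ici le_rfl).mono
      ((hJg a (by omega)).trans (Set.Iic_subset_Iio.2 ((hgap a (by omega)).trans_le (hf hab))))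
      (hJf b hb)
  intro a ha b hb hab
  rcases hab.lt_or_gt with h | h
  exacts [hsep a b h hb, (hsep b a h ha).symm]

theorem stmt12 (r α β : ℝ) (hr : 1 < r) (hα : 1 ≤ α) (hαβ : α < β)
    (p : ℕ) (hp : p.Prime) (a0 : ℕ)
    (ha0 : sigma' r (p ^ (a0 + 1)) / sigma' r (p ^ a0) ≤ β / α)
    (ha0min : ∀ a < a0, β / α < sigma' r (p ^ (a + 1)) / sigma' r (p ^ a)) :
    let J : ℕ → Set ℝ := fun a =>
      if a < a0 then Set.Icc (sigma' r (p ^ a) * α) (sigma' r (p ^ a) * β)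
      else Set.Icc (sigma' r (p ^ a0) * α) ((1 - (p : ℝ) ^ (-r))⁻¹ * β)
    (∀ a ≤ a0, ∀ b ≤ a0, a ≠ b → Disjoint (J a) (J b)) ∧
      ((⋃ a : ℕ, Set.Icc (sigma' r (p ^ a) * α) (sigma' r (p ^ a) * β)) ∪
          Set.Icc ((1 - (p : ℝ) ^ (-r))⁻¹ * α) ((1 - (p : ℝ) ^ (-r))⁻¹ * β)) =
        ⋃ a ∈ Finset.range (a0 + 1), J a := by
  intro J
  set S : ℕ → ℝ := fun a => sigma' r (p ^ a)
  have hα0 : 0 < α := by linarith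
  have hS := monotone_sigma'_prime_pow r hp
  have hgap : ∀ a < a0, S a * β < S (a + 1) * α := fun a ha => by
    have := ha0min a ha
    rwa [div_lt_div_iff₀ hα0 (sigma'_prime_pow_pos r hp a), mul_comm β] at this
  have hchain : ∀ a ≥ a0, S (a + 1) * α ≤ S a * β := fun a ha => by
    have := (antitone_sigma'_prime_pow_succ_div r hp ha).trans ha0
    rwa [div_le_div_iff₀ (sigma'_prime_pow_pos r hp a) hα0, mul_comm β] at this
  have hJlt : ∀ a < a0, J a = Set.Icc (S a * α) (S a * β) := fun a ha => if_pos ha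
  have hJa0 : J a0 = Set.Icc (S a0 * α) ((1 - (p : ℝ) ^ (-r))⁻¹ * β) := if_neg (lt_irrefl a0)
  refine ⟨disjoint_of_subset_Iic_of_subset_Ici (hS.mul_const hα0.le) hgap
    (fun a ha => hJlt a ha ▸ Set.Icc_subset_Iic_self) fun a ha => ?_, ?_⟩
  · rcases ha.lt_or_eq with ha | rfl
    exacts [hJlt a ha ▸ Set.Icc_subset_Ici_self, hJa0 ▸ Set.Icc_subset_Ici_self]
  · rw [Finset.range_add_one, Finset.set_biUnion_insert, hJa0,
      ← biUnion_Icc_union_Icc_eq_Icc_of_tendsto (hS.mul_const hα0.le) (hS.mul_const (by linarith))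
        ((tendsto_sigma'_prime_pow hp (by linarith)).mul_const α)
        ((tendsto_sigma'_prime_pow hp (by linarith)).mul_const β) hchain,
      Set.iUnion₂_congr fun a ha => hJlt a (Finset.mem_range.1 ha),
      iUnion_eq_biUnion_ge_union_biUnion_range _ a0, Set.union_right_comm]
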